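/- Let g be a nilpotent Lie algebra with Z(g) = [g,g] of even dimension, such that ad_x : g → [g,g] is surjective for every x ∉ Z(g). Then for every integrable complex structure J on g, the centre Z(g) is J-invariant. -/

import Mathlib

/-!
If `z` is central, the integrability condition applied to `(x, z)` says that `ad (J z)` commutes
with `J`. If moreover `J z` were not central, surjectivity of `ad (J z)` onto `[g, g] ∋ z` would
give `y` with `⁅J z, y⁆ = z`, whence `J z = J ⁅J z, y⁆ = ⁅J z, J y⁆ ∈ [g, g] = Z(g)`.
-/

namespace LieAlgebra

variable {R L : Type*} [CommRing R] [LieRing L] [LieAlgebra R L]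

theorem lie_mem_derivedSeries_one (x y : L) : ⁅x, y⁆ ∈ derivedSeries R L 1 := by
  rw [derivedSeries_def, derivedSeriesOfIdeal_succ, derivedSeriesOfIdeal_zero]
  exact LieSubmodule.lie_mem_lie (LieSubmodule.mem_top x) (LieSubmodule.mem_top y)

theorem lie_apply_apply_eq_apply_lie_of_mem_center (J : L →ₗ[R] L)
    (hint : ∀ x y : L, ⁅x, y⁆ - ⁅J x, J y⁆ + J ⁅J x, y⁆ + J ⁅x, J y⁆ = 0)
    {z : L} (hz : z ∈ center R L) (x : L) : ⁅J z, J x⁆ = J ⁅J z, x⁆ := by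
  have hcomm : ∀ w : L, ⁅w, z⁆ = 0 := (LieModule.mem_maxTrivSubmodule R L L z).mp hz
  have hxz := hint x z
  simp only [hcomm, map_zero, zero_sub, add_zero, neg_add_eq_zero] at hxz
  rw [← lie_skew, hxz, ← map_neg, lie_skew]

end LieAlgebra

theorem stmt_17_general (g : Type*) [LieRing g] [LieAlgebra ℝ g]
    (hZC : (LieAlgebra.center ℝ g : Submodule ℝ g) =
      (LieAlgebra.derivedSeries ℝ g 1 : Submodule ℝ g))
    (hsurj : ∀ x : g, x ∉ LieAlgebra.center ℝ g →
      ∀ c ∈ LieAlgebra.derivedSeries ℝ g 1, ∃ y : g, ⁅x, y⁆ = c)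
    (J : g →ₗ[ℝ] g)
    (hint : ∀ x y : g, ⁅x, y⁆ - ⁅J x, J y⁆ + J ⁅J x, y⁆ + J ⁅x, J y⁆ = 0) :
    ∀ z ∈ LieAlgebra.center ℝ g, J z ∈ LieAlgebra.center ℝ g := by
  have hmem_center : ∀ w : g, w ∈ LieAlgebra.center ℝ g ↔ w ∈ LieAlgebra.derivedSeries ℝ g 1 :=
    fun w ↦ SetLike.ext_iff.mp hZC w
  intro z hz
  by_contra hJz
  obtain ⟨y, hy⟩ := hsurj (J z) hJz z ((hmem_center z).mp hz)
  have hJz_eq : J z = ⁅J z, J y⁆ := by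
    rw [LieAlgebra.lie_apply_apply_eq_apply_lie_of_mem_center J hint hz, hy]
  exact hJz ((hmem_center _).mpr (hJz_eq ▸ LieAlgebra.lie_mem_derivedSeries_one _ _))

/-- For a nilpotent Lie algebra with `Z(g) = [g,g]` of even dimension, such that `ad_x`
surjects onto `[g,g]` for every non-central `x`, the centre is invariant under every
integrable complex structure. -/
theorem stmt_17 (g : Type*) [LieRing g] [LieAlgebra ℝ g] [LieRing.IsNilpotent g]
    [Module.Finite ℝ g]
    (hZC : (LieAlgebra.center ℝ g : Submodule ℝ g) =
      (LieAlgebra.derivedSeries ℝ g 1 : Submodule ℝ g))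
    (heven : Even (Module.finrank ℝ (LieAlgebra.center ℝ g : Submodule ℝ g)))
    (hsurj : ∀ x : g, x ∉ LieAlgebra.center ℝ g →
      ∀ c ∈ LieAlgebra.derivedSeries ℝ g 1, ∃ y : g, ⁅x, y⁆ = c)
    (J : g →ₗ[ℝ] g) (hJ : J ∘ₗ J = -LinearMap.id)
    (hint : ∀ x y : g, ⁅x, y⁆ - ⁅J x, J y⁆ + J ⁅J x, y⁆ + J ⁅x, J y⁆ = 0) :
    ∀ z ∈ LieAlgebra.center ℝ g, J z ∈ LieAlgebra.center ℝ g :=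
  stmt_17_general g hZC hsurj J hint
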